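/- Let λ, μ₁, μ₂ > 0 be real numbers, and for u, v > 0 and s ≥ 0 define N(s, u, v) = (s + λ)(s + λ + v)(s + λ + u) + λ(s + λ)(s + λ + v) + λu(s + 2λ + v) and D(s, u, v) = (s + λ)²(s + λ + u)(s + λ + v) − λ²uv; D(s, u, v) > 0 for all s ≥ 0. Then μ₁ ≥ μ₂ if and only if N(s, μ₁, μ₂)/D(s, μ₁, μ₂) ≥ N(s, μ₂, μ₁)/D(s, μ₂, μ₁) for all s ≥ 0; that is, for a cold standby system with equal unit failure rates λ₁ = λ₂ = λ, μ₁ ≥ μ₂ holds if and only if τ₀^C ≥_lt τ₃^C. -/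
import Mathlib


/-- Numerator of the Laplace transform of the survival function of the cold standby
system with equal unit failure rates `lam`, repair rates `u` (the unit initially
working) and `v`. -/
def Npoly (lam s u v : ℝ) : ℝ :=
  (s + lam) * (s + lam + v) * (s + lam + u) + lam * (s + lam) * (s + lam + v) +
    lam * u * (s + 2 * lam + v)

/-- Denominator of the Laplace transform of the survival function of the cold standby
system with equal unit failure rates `lam` and repair rates `u`, `v`. -/
def Dpoly (lam s u v : ℝ) : ℝ :=
  (s + lam) ^ 2 * (s + lam + u) * (s + lam + v) - lam ^ 2 * u * v

/-- The positive cofactor in the key factorization. -/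
def Ppoly (lam s u v : ℝ) : ℝ :=
  lam ^ 5 * (u + v) + lam ^ 6 + 2 * s * lam ^ 3 * (u * v) + 3 * s * lam ^ 4 * (u + v) +
    4 * s * lam ^ 5 + s ^ 2 * lam ^ 2 * (u * v) + 3 * s ^ 2 * lam ^ 3 * (u + v) +
    6 * s ^ 2 * lam ^ 4 + s ^ 3 * lam ^ 2 * (u + v) + 4 * s ^ 3 * lam ^ 3 + s ^ 4 * lam ^ 2

lemma key_factor (lam s u v : ℝ) :
    Npoly lam s u v * Dpoly lam s v u - Npoly lam s v u * Dpoly lam s u v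
      = (u - v) * Ppoly lam s u v := by
  unfold Npoly Dpoly Ppoly; ring

lemma Ppoly_pos (lam s u v : ℝ) (hl : 0 < lam) (hu : 0 < u) (hv : 0 < v) (hs : 0 ≤ s) :
    0 < Ppoly lam s u v := by
  have h6 : (0:ℝ) < lam ^ 6 := by positivity
  have huv : 0 < u * v := mul_pos hu hv
  have hsum : 0 < u + v := by linarith
  have t1 : 0 ≤ lam ^ 5 * (u + v) := by positivity
  have t2 : 0 ≤ 2 * s * lam ^ 3 * (u * v) := by positivity
  have t3 : 0 ≤ 3 * s * lam ^ 4 * (u + v) := by positivity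
  have t4 : 0 ≤ 4 * s * lam ^ 5 := by positivity
  have t5 : 0 ≤ s ^ 2 * lam ^ 2 * (u * v) := by positivity
  have t6 : 0 ≤ 3 * s ^ 2 * lam ^ 3 * (u + v) := by positivity
  have t7 : 0 ≤ 6 * s ^ 2 * lam ^ 4 := by positivity
  have t8 : 0 ≤ s ^ 3 * lam ^ 2 * (u + v) := by positivity
  have t9 : 0 ≤ 4 * s ^ 3 * lam ^ 3 := by positivity
  have t10 : 0 ≤ s ^ 4 * lam ^ 2 := by positivity
  unfold Ppoly; linarith

lemma Dpoly_pos (lam s u v : ℝ) (hl : 0 < lam) (hu : 0 < u) (hv : 0 < v) (hs : 0 ≤ s) :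
    0 < Dpoly lam s u v := by
  have h1 : lam ^ 2 * u * v < (s + lam) ^ 2 * (s + lam + u) * (s + lam + v) := by
    have a1 : lam ^ 2 ≤ (s + lam) ^ 2 := by nlinarith
    have a2 : u * v < (s + lam + u) * (s + lam + v) := by nlinarith
    calc lam ^ 2 * u * v = lam ^ 2 * (u * v) := by ring
      _ < lam ^ 2 * ((s + lam + u) * (s + lam + v)) := by
          exact mul_lt_mul_of_pos_left a2 (by positivity)
      _ ≤ (s + lam) ^ 2 * ((s + lam + u) * (s + lam + v)) := by
          apply mul_le_mul_of_nonneg_right a1 (by nlinarith)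
      _ = (s + lam) ^ 2 * (s + lam + u) * (s + lam + v) := by ring
  unfold Dpoly; linarith

theorem cold_lt_iff_repair (lam m1 m2 : ℝ)
    (hl : 0 < lam) (h1 : 0 < m1) (h2 : 0 < m2) :
    (∀ s ≥ (0 : ℝ), 0 < Dpoly lam s m1 m2 ∧ 0 < Dpoly lam s m2 m1) ∧
      (m1 ≥ m2 ↔ ∀ s ≥ (0 : ℝ),
        Npoly lam s m1 m2 / Dpoly lam s m1 m2 ≥ Npoly lam s m2 m1 / Dpoly lam s m2 m1) := by
  refine ⟨fun s hs => ⟨Dpoly_pos lam s m1 m2 hl h1 h2 hs, Dpoly_pos lam s m2 m1 hl h2 h1 hs⟩, ?_, ?_⟩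
  · intro hm s hs
    have hD1 := Dpoly_pos lam s m1 m2 hl h1 h2 hs
    have hD2 := Dpoly_pos lam s m2 m1 hl h2 h1 hs
    rw [ge_iff_le, div_le_div_iff₀ hD2 hD1]
    have hk := key_factor lam s m1 m2
    have hP := Ppoly_pos lam s m1 m2 hl h1 h2 hs
    nlinarith [mul_nonneg (sub_nonneg.2 hm) hP.le]
  · intro h
    have h0 := h 0 le_rfl
    have hD1 := Dpoly_pos lam 0 m1 m2 hl h1 h2 le_rfl
    have hD2 := Dpoly_pos lam 0 m2 m1 hl h2 h1 le_rfl
    rw [ge_iff_le, div_le_div_iff₀ hD2 hD1] at h0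
    have hk := key_factor lam 0 m1 m2
    have hP := Ppoly_pos lam 0 m1 m2 hl h1 h2 le_rfl
    by_contra hc
    push_neg at hc
    nlinarith [mul_pos hP (sub_pos.2 hc)]
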